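/- arXiv:math/0404400 — 2 statements merged into one kernel-verified Lean document; each statement's English description precedes it below -/
import Mathlib

section
/- Let k be a positive integer and let x be an element of the algebraic closure of Q_p with x^{p^k} = x. Then the formal identity E(t)^{x + x^p + ⋯ + x^{p^{k-1}}} = E(tx)·E(tx^p)⋯E(tx^{p^{k-1}}) holds, where E is the Artin-Hasse exponential and the left side is defined via exp of the scalar multiple of log E. -/
/-!
The series `log E(t) = ∑ t^{p^i}/p^i` only has terms in degrees `p^i`, and in each such degree
`∑_j (x^{p^j})^{p^i} = ∑_j x^{p^{i+j}} = ∑_j x^{p^j}` because `j ↦ x^{p^j}` has period `k`.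
Hence `(∑_j x^{p^j}) • log E(t) = ∑_j log E(x^{p^j} t)`, and `exp` turns this sum of series
without constant term into the product of the `E(x^{p^j} t)`. That `exp (f + g) = exp f * exp g`
follows because both sides solve `y' = (f + g)' y` with `y(0) = 1`.
-/

noncomputable def expOf {R : Type*} [CommRing R] [Algebra ℚ R] (f : PowerSeries R) :
    PowerSeries R :=
  PowerSeries.mk fun n => ∑ k ∈ Finset.range (n + 1),
    algebraMap ℚ R (1 / (k.factorial : ℚ)) * PowerSeries.coeff (R := R) n (f ^ k)

open scoped Classical in
/-- The logarithm of the Artin–Hasse series: `∑_{i≥0} t^{p^i}/p^i`. -/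
noncomputable def AHlog (p : ℕ) (R : Type*) [CommRing R] [Algebra ℚ R] : PowerSeries R :=
  PowerSeries.mk fun n =>
    if h : ∃ i : ℕ, n = p ^ i then algebraMap ℚ R (((p : ℚ) ^ h.choose)⁻¹) else 0

/-- The Artin–Hasse exponential series `E(t) = exp(∑_{i≥0} t^{p^i}/p^i)`. -/
noncomputable def AH (p : ℕ) (R : Type*) [CommRing R] [Algebra ℚ R] : PowerSeries R :=
  expOf (AHlog p R)

/-- `ord_p`, the `p`-adic valuation attached to the norm, normalized by `ordp p p = 1`. -/
noncomputable def ordp (p : ℕ) {K : Type*} [NormedField K] (x : K) : ℝ :=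
  -Real.logb p ‖x‖

/-- Evaluation of the Artin–Hasse series at an element of a normed `ℚ_p`-algebra. -/
noncomputable def AHeval (p : ℕ) [Fact p.Prime] {K : Type*} [NormedField K]
    [Algebra ℚ_[p] K] (x : K) : K :=
  ∑' n : ℕ, algebraMap ℚ_[p] K (PowerSeries.coeff (R := ℚ_[p]) n (AH p ℚ_[p])) * x ^ n

theorem Function.Periodic.sum_range_add {M : Type*} [AddCancelCommMonoid M] {g : ℕ → M} {k : ℕ}
    (hg : Function.Periodic g k) (i : ℕ) :
    ∑ j ∈ Finset.range k, g (j + i) = ∑ j ∈ Finset.range k, g j := by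
  induction i with
  | zero => rfl
  | succ i ih =>
    rw [← ih]
    -- both sides plus `g i` are `∑ j ∈ range (k + 1), g (j + i)`, using `g (k + i) = g i`
    refine add_right_cancel (b := g i) ?_
    have := (Finset.sum_range_succ' (fun j => g (j + i)) k).symm.trans
      (Finset.sum_range_succ (fun j => g (j + i)) k)
    simpa only [zero_add, add_right_comm _ 1 i, add_comm k i, hg i, add_assoc] using this

theorem sum_range_pow_pow_pow {R : Type*} [CommRing R] {p k : ℕ} {x : R}
    (hx : x ^ p ^ k = x) (i : ℕ) :
    ∑ j ∈ Finset.range k, (x ^ p ^ j) ^ p ^ i = ∑ j ∈ Finset.range k, x ^ p ^ j := by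
  have hper : Function.Periodic (fun j => x ^ p ^ j) k := fun j => by
    dsimp only
    rw [pow_add, mul_comm, pow_mul, hx]
  simpa only [← pow_mul, ← pow_add] using hper.sum_range_add i

namespace PowerSeries

variable {R : Type*} [CommRing R]

theorem eq_of_derivative_eq_mul_of_constantCoeff_eq [IsAddTorsionFree R] {h y z : R⟦X⟧}
    (hy : d⁄dX R y = h * y) (hz : d⁄dX R z = h * z) (hz0 : IsUnit (constantCoeff z))
    (hyz : constantCoeff y = constantCoeff z) : y = z := by
  obtain ⟨u, rfl⟩ := isUnit_iff_constantCoeff.mpr hz0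
  -- `y u⁻¹` has derivative `h y u⁻¹ - y u⁻² h u = 0`
  have hconst : y * ↑u⁻¹ = 1 := by
    refine derivative.ext ?_ ?_
    · rw [Derivation.leibniz, derivative_inv, hy, hz, derivative_one, smul_eq_mul, smul_eq_mul]
      linear_combination (-(h * y * ↑u⁻¹)) * u.inv_mul
    · rw [map_mul, hyz, ← map_mul, Units.mul_inv, map_one]
  simpa using congrArg (· * (u : R⟦X⟧)) hconst

theorem constantCoeff_rescale (a : R) (f : R⟦X⟧) :
    constantCoeff (rescale a f) = constantCoeff f := by
  rw [← coeff_zero_eq_constantCoeff_apply, coeff_rescale, pow_zero, one_mul,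
    coeff_zero_eq_constantCoeff_apply]

theorem sum_rescale_eq_smul {ι : Type*} (s : Finset ι) (a : ι → R) (L : R⟦X⟧)
    (h : ∀ n, coeff n L ≠ 0 → ∑ j ∈ s, a j ^ n = ∑ j ∈ s, a j) :
    ∑ j ∈ s, rescale (a j) L = (∑ j ∈ s, a j) • L := by
  ext n
  simp only [map_sum, coeff_rescale, coeff_smul, smul_eq_mul, ← Finset.sum_mul]
  by_cases hn : coeff n L = 0
  · simp [hn]
  · rw [h n hn]

end PowerSeries

section ExpOf

open PowerSeries Finset

variable {R : Type*} [CommRing R] [Algebra ℚ R]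

theorem coeff_expOf (f : R⟦X⟧) (n : ℕ) :
    coeff n (expOf f) =
      ∑ k ∈ range (n + 1), algebraMap ℚ R (1 / (k.factorial : ℚ)) * coeff n (f ^ k) :=
  coeff_mk _ _

theorem constantCoeff_expOf (f : R⟦X⟧) : constantCoeff (expOf f) = 1 := by
  rw [← coeff_zero_eq_constantCoeff_apply, coeff_expOf]
  simp

theorem expOf_eq_subst_exp {f : R⟦X⟧} (hf : constantCoeff f = 0) :
    expOf f = (exp R).subst f := by
  ext n
  rw [coeff_expOf, coeff_subst' (HasSubst.of_constantCoeff_zero' hf),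
    finsum_eq_sum_of_support_subset (s := range (n + 1))]
  · simp [coeff_exp, smul_eq_mul]
  · intro d hd
    by_contra hdn
    refine hd (smul_eq_zero_of_right _ (coeff_of_lt_order _ ?_))
    refine lt_of_lt_of_le ?_ (le_order_pow_of_constantCoeff_eq_zero d hf)
    exact_mod_cast (by simpa using hdn : n < d)

theorem derivative_expOf {f : R⟦X⟧} (hf : constantCoeff f = 0) :
    d⁄dX R (expOf f) = d⁄dX R f * expOf f := by
  rw [expOf_eq_subst_exp hf, derivative_subst (HasSubst.of_constantCoeff_zero' hf),
    derivative_exp, mul_comm]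

theorem expOf_zero : expOf (0 : R⟦X⟧) = 1 := by
  have := IsAddTorsionFree.of_module_rat R
  refine derivative.ext ?_ ?_
  · rw [derivative_expOf (map_zero _), map_zero, zero_mul, derivative_one]
  · rw [constantCoeff_expOf, map_one]

theorem expOf_add {f g : R⟦X⟧} (hf : constantCoeff f = 0) (hg : constantCoeff g = 0) :
    expOf (f + g) = expOf f * expOf g := by
  have := IsAddTorsionFree.of_module_rat R
  refine eq_of_derivative_eq_mul_of_constantCoeff_eq (h := d⁄dX R (f + g)) ?_ ?_ ?_ ?_
  · exact derivative_expOf (by rw [map_add, hf, hg, add_zero])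
  · rw [Derivation.leibniz, derivative_expOf hf, derivative_expOf hg, map_add, smul_eq_mul,
      smul_eq_mul]
    ring
  · simp [constantCoeff_expOf]
  · simp [constantCoeff_expOf]

theorem expOf_sum {ι : Type*} (s : Finset ι) (F : ι → R⟦X⟧)
    (hF : ∀ j ∈ s, constantCoeff (F j) = 0) :
    expOf (∑ j ∈ s, F j) = ∏ j ∈ s, expOf (F j) := by
  classical
  induction s using Finset.induction_on with
  | empty => exact expOf_zero
  | insert a s ha ih =>
    simp only [mem_insert, forall_eq_or_imp] at hF
    rw [sum_insert ha, prod_insert ha, ← ih hF.2,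
      expOf_add hF.1 (by rw [map_sum]; exact sum_eq_zero hF.2)]

theorem rescale_expOf (a : R) (f : R⟦X⟧) : rescale a (expOf f) = expOf (rescale a f) := by
  ext n
  simp only [coeff_rescale, coeff_expOf, mul_sum, ← map_pow, mul_left_comm]

end ExpOf

section AHlog

open PowerSeries

variable {R : Type*} [CommRing R] [Algebra ℚ R]

theorem constantCoeff_AHlog (p : ℕ) : constantCoeff (AHlog p R) = 0 := by
  rw [← coeff_zero_eq_constantCoeff_apply, AHlog, coeff_mk]
  split_ifs with h
  -- `0 = p ^ i` only for `p = 0`, where the coefficient is the junk value `0⁻¹ = 0`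
  · rw [show (p : ℚ) ^ h.choose = 0 by exact_mod_cast h.choose_spec.symm, inv_zero, map_zero]
  · rfl

theorem exists_eq_pow_of_coeff_AHlog_ne_zero {p n : ℕ} (h : coeff n (AHlog p R) ≠ 0) :
    ∃ i, n = p ^ i := by
  by_contra hn
  exact h (by rw [AHlog, coeff_mk, dif_neg hn])

end AHlog

theorem artin_hasse_pow_trace_formal_general (p : ℕ) (k : ℕ)
    (R : Type*) [CommRing R] [Algebra ℚ R] (x : R) (hx : x ^ p ^ k = x) :
    expOf ((∑ j ∈ Finset.range k, x ^ p ^ j) • AHlog p R)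
      = ∏ j ∈ Finset.range k, PowerSeries.rescale (x ^ p ^ j) (AH p R) := by
  have htrace := PowerSeries.sum_rescale_eq_smul (Finset.range k) (fun j => x ^ p ^ j)
    (AHlog p R) fun n hn => by
      obtain ⟨i, rfl⟩ := exists_eq_pow_of_coeff_AHlog_ne_zero hn
      exact sum_range_pow_pow_pow hx i
  rw [← htrace, expOf_sum]
  · exact Finset.prod_congr rfl fun j _ => (rescale_expOf _ _).symm
  · exact fun j _ => (PowerSeries.constantCoeff_rescale _ _).trans (constantCoeff_AHlog p)

/-- Formal identity: if `x^{p^k} = x`, then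
`E(t)^{x+x^p+⋯+x^{p^{k-1}}} = E(tx)·E(tx^p)⋯E(tx^{p^{k-1}})`, where the left-hand side
is `exp` of the scalar multiple of `log E(t) = ∑_{i≥0} t^{p^i}/p^i`. -/
theorem artin_hasse_pow_trace_formal (p : ℕ) [Fact p.Prime] (k : ℕ) (hk : 1 ≤ k)
    (R : Type*) [CommRing R] [Algebra ℚ R] (x : R) (hx : x ^ p ^ k = x) :
    expOf ((∑ j ∈ Finset.range k, x ^ p ^ j) • AHlog p R)
      = ∏ j ∈ Finset.range k, PowerSeries.rescale (x ^ p ^ j) (AH p R) :=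
  artin_hasse_pow_trace_formal_general p k R x hx
end

section
/- Let π be an element of the algebraic closure of Q_p with ord_p(π) = 1/(p^{m-i-1}(p-1)), a root of ∑_{l≥0} t^{p^l}/p^l = 0, and set γ_j = ∑_{l=0}^{j} π^{p^l}/p^l. If j ≥ m−i, then ord_p(p^j γ_j) ≥ p^{j+1}/(p^{m-i-1}(p-1)) − 1. In particular, ord_p(p^j γ_j) − 1/(p-1) ≥ p^{j-(m-i)+1} − 1. -/
/-!
The terms `aₗ = π^{pˡ}/pˡ` have `ord_p aₗ = pˡ/(p^{m-i-1}(p-1)) - l`, which increases strictly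
for `l ≥ m - i`. Since `∑ aₗ = 0`, the partial sum `γ_j` is minus the tail `∑_{l>j} aₗ`, and in
the ultrametric field `K` (it is one because `‖p‖ < 1`) that tail has the valuation of its leading
term `a_{j+1}`. Hence `ord_p(p^j γ_j) = p^{j+1}/(p^{m-i-1}(p-1)) - 1` exactly.
-/

section CharZero

variable {K : Type*} [NormedField K]

/-- In positive characteristic `q` every nonzero natural number is a `(q - 1)`-th root of unity,
hence has norm `1`. -/
lemma charZero_of_norm_natCast_ne_one {n : ℕ} (hn₀ : (n : K) ≠ 0) (hn₁ : ‖(n : K)‖ ≠ 1) :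
    CharZero K := by
  obtain ⟨q, hq⟩ := CharP.exists K
  rcases CharP.char_is_prime_or_zero K q with hq_prime | rfl
  · have : Fact q.Prime := ⟨hq_prime⟩
    have hnq : (n : ZMod q) ≠ 0 := by
      intro h
      exact hn₀ (by simpa using congrArg (ZMod.castHom dvd_rfl K) h)
    have hroot : (n : K) ^ (q - 1) = 1 := by
      simpa using congrArg (ZMod.castHom dvd_rfl K) (ZMod.pow_card_sub_one_eq_one hnq)
    have hfin : IsOfFinOrder (n : K) :=
      isOfFinOrder_iff_pow_eq_one.2 ⟨q - 1, by have := hq_prime.two_le; omega, hroot⟩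
    exact absurd hfin.norm_eq_one hn₁
  · exact CharP.charP_to_charZero K

/-- By Ostrowski's lemma, a norm on `ℚ` that is unbounded on `ℕ` exceeds `1` at every `n > 1`. -/
lemma isUltrametricDist_of_norm_natCast_lt_one [CharZero K] {n : ℕ} (hn : 1 < n)
    (h : ‖(n : K)‖ < 1) : IsUltrametricDist K := by
  let v : AbsoluteValue ℚ ℝ := (NormedField.toAbsoluteValue K).comp (Rat.castHom K).injective
  have hv (k : ℕ) : v k = ‖(k : K)‖ := by simp [v, AbsoluteValue.comp, NormedField.toAbsoluteValue]
  refine IsUltrametricDist.isUltrametricDist_of_forall_norm_natCast_le_one fun k => ?_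
  by_contra hk
  have := Rat.AbsoluteValue.one_lt_of_not_bounded (f := v) (fun h => hk (hv k ▸ h k)) hn
  rw [hv] at this
  linarith

end CharZero

section Ultrametric

variable {E : Type*} [NormedAddCommGroup E] [IsUltrametricDist E]

lemma norm_tsum_eq_norm_zero_of_strictAnti {f : ℕ → E} (hf : Summable f)
    (hanti : StrictAnti (‖f ·‖)) : ‖∑' n, f n‖ = ‖f 0‖ := by
  have htail : ‖∑' n, f (n + 1)‖ < ‖f 0‖ :=
    (IsUltrametricDist.norm_tsum_le_of_forall_le fun n =>
      hanti.antitone (Nat.le_add_left 1 n)).trans_lt (hanti Nat.zero_lt_one)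
  rw [hf.tsum_eq_zero_add, IsUltrametricDist.norm_add_eq_max_of_norm_ne_norm htail.ne',
    max_eq_left htail.le]

lemma norm_sum_range_eq_of_hasSum_zero {f : ℕ → E} {N : ℕ} (hf : HasSum f 0)
    (hanti : StrictAnti fun n => ‖f (n + N)‖) : ‖∑ l ∈ Finset.range N, f l‖ = ‖f N‖ := by
  have htail : HasSum (fun n => f (n + N)) (-∑ l ∈ Finset.range N, f l) := by
    simpa using (hasSum_nat_add_iff' N).2 hf
  rw [← norm_neg, ← htail.tsum_eq,
    norm_tsum_eq_norm_zero_of_strictAnti htail.summable hanti, zero_add]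

end Ultrametric

section ordp

variable {p : ℕ} {K : Type*} [NormedField K]

lemma ordp_zero : ordp p (0 : K) = 0 := by
  simp [ordp]

lemma ordp_mul {x y : K} (hx : x ≠ 0) (hy : y ≠ 0) : ordp p (x * y) = ordp p x + ordp p y := by
  simp only [ordp, norm_mul, Real.logb_mul (norm_ne_zero_iff.2 hx) (norm_ne_zero_iff.2 hy)]
  ring

lemma ordp_div {x y : K} (hx : x ≠ 0) (hy : y ≠ 0) : ordp p (x / y) = ordp p x - ordp p y := by
  simp only [ordp, norm_div, Real.logb_div (norm_ne_zero_iff.2 hx) (norm_ne_zero_iff.2 hy)]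
  ring

lemma ordp_pow (x : K) (n : ℕ) : ordp p (x ^ n) = n * ordp p x := by
  simp only [ordp, norm_pow, Real.logb_pow]
  ring

lemma ordp_eq_one_of_norm_eq_inv (hp : 1 < p) {x : K} (hx : ‖x‖ = (p : ℝ)⁻¹) : ordp p x = 1 := by
  rw [ordp, hx, Real.logb_inv, Real.logb_self_eq_one (by exact_mod_cast hp), neg_neg]

lemma ordp_lt_ordp_iff (hp : 1 < p) {x y : K} (hx : x ≠ 0) (hy : y ≠ 0) :
    ordp p x < ordp p y ↔ ‖y‖ < ‖x‖ := by
  rw [ordp, ordp, neg_lt_neg_iff,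
    Real.logb_lt_logb_iff (by exact_mod_cast hp) (norm_pos_iff.2 hy) (norm_pos_iff.2 hx)]

lemma ordp_pow_pow_div_pow (hp : 1 < p) (hpK : ‖(p : K)‖ = (p : ℝ)⁻¹) {x : K} (hx : x ≠ 0)
    (l : ℕ) : ordp p (x ^ p ^ l / (p : K) ^ l) = (p : ℝ) ^ l * ordp p x - l := by
  have hp₀ : (p : K) ≠ 0 := norm_ne_zero_iff.1 (by rw [hpK]; positivity)
  rw [ordp_div (pow_ne_zero _ hx) (pow_ne_zero _ hp₀), ordp_pow, ordp_pow,
    ordp_eq_one_of_norm_eq_inv hp hpK]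
  push_cast
  ring

end ordp

section Arithmetic

variable {P : ℝ}

lemma pow_div_sub_lt_pow_succ_div_sub (hP : 1 < P) {k l : ℕ} (hkl : k < l) :
    P ^ l / (P ^ k * (P - 1)) - l < P ^ (l + 1) / (P ^ k * (P - 1)) - (l + 1 : ℕ) := by
  obtain ⟨d, rfl⟩ := Nat.exists_eq_add_of_lt hkl
  have hstep : P ^ (k + d + 1 + 1) / (P ^ k * (P - 1))
      = P ^ (k + d + 1) / (P ^ k * (P - 1)) + P ^ (d + 1) := by
    have : P - 1 ≠ 0 := by linarith
    field_simp
    ring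
  rw [hstep]
  push_cast
  linarith [one_lt_pow₀ hP (n := d + 1) (by omega)]

lemma pow_sub_le_pow_succ_div_sub (hP : 1 < P) {k j : ℕ} (hkj : k ≤ j) :
    P ^ (j - k) ≤ P ^ (j + 1) / (P ^ k * (P - 1)) - 1 / (P - 1) := by
  obtain ⟨d, rfl⟩ := Nat.exists_eq_add_of_le hkj
  have hP₁ : 0 < P - 1 := by linarith
  have hd : P ^ (k + d + 1) / (P ^ k * (P - 1)) - 1 / (P - 1) = (P ^ (d + 1) - 1) / (P - 1) := by
    field_simp
    ring
  rw [Nat.add_sub_cancel_left, hd, le_div_iff₀ hP₁]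
  nlinarith [one_le_pow₀ (n := d) hP.le, pow_succ P d]

end Arithmetic

/-- Let `π` be a root of `∑_{l≥0} t^{p^l}/p^l = 0` with `ord_p(π) = 1/(p^{m-i-1}(p-1))` and
`γ_j = ∑_{l=0}^{j} π^{p^l}/p^l`.  If `j ≥ m−i`, then
`ord_p(p^j γ_j) ≥ p^{j+1}/(p^{m-i-1}(p-1)) − 1`; in particular
`ord_p(p^j γ_j) − 1/(p-1) ≥ p^{j-(m-i)+1} − 1`. -/
theorem ordp_gamma_large_j (p : ℕ) [Fact p.Prime] (m i j : ℕ)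
    (him : i + 1 ≤ m) (hj : m - i ≤ j)
    (K : Type*) [NormedField K]
    (hpK : ‖(p : K)‖ = (p : ℝ)⁻¹)
    (π : K)
    (hroot : HasSum (fun l : ℕ => π ^ p ^ l / (p : K) ^ l) 0)
    (hord : ordp p π = ((p : ℝ) ^ (m - i - 1) * ((p : ℝ) - 1))⁻¹) :
    (p : ℝ) ^ (j + 1) / ((p : ℝ) ^ (m - i - 1) * ((p : ℝ) - 1)) - 1
        ≤ ordp p ((p : K) ^ j * ∑ l ∈ Finset.range (j + 1), π ^ p ^ l / (p : K) ^ l) ∧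
    (p : ℝ) ^ (j - (m - i) + 1) - 1
        ≤ ordp p ((p : K) ^ j * ∑ l ∈ Finset.range (j + 1), π ^ p ^ l / (p : K) ^ l)
            - 1 / ((p : ℝ) - 1) := by
  have hp : 1 < p := (Fact.out : p.Prime).one_lt
  have hP : (1 : ℝ) < p := by exact_mod_cast hp
  have hp₀ : (p : K) ≠ 0 := norm_ne_zero_iff.1 (by rw [hpK]; positivity)
  have hpK₁ : ‖(p : K)‖ < 1 := hpK ▸ inv_lt_one_of_one_lt₀ hP
  have := charZero_of_norm_natCast_ne_one hp₀ hpK₁.ne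
  have := isUltrametricDist_of_norm_natCast_lt_one hp hpK₁
  set a : ℕ → K := fun l => π ^ p ^ l / (p : K) ^ l
  have hπ : π ≠ 0 := by
    rintro rfl
    rw [ordp_zero] at hord
    exact (inv_pos.2 (by positivity : (0 : ℝ) < (p : ℝ) ^ (m - i - 1) * ((p : ℝ) - 1))).ne hord
  have ha₀ (l : ℕ) : a l ≠ 0 := div_ne_zero (pow_ne_zero _ hπ) (pow_ne_zero _ hp₀)
  have hord_a (l : ℕ) :
      ordp p (a l) = (p : ℝ) ^ l / ((p : ℝ) ^ (m - i - 1) * ((p : ℝ) - 1)) - l := by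
    rw [ordp_pow_pow_div_pow hp hpK hπ, hord, div_eq_mul_inv]
  have hanti : StrictAnti fun n => ‖a (n + (j + 1))‖ := strictAnti_nat_of_succ_lt fun n => by
    rw [← ordp_lt_ordp_iff hp (ha₀ _) (ha₀ _), hord_a, hord_a, add_right_comm]
    exact pow_div_sub_lt_pow_succ_div_sub hP (by omega)
  have hγ := norm_sum_range_eq_of_hasSum_zero hroot hanti
  have hγ₀ : ∑ l ∈ Finset.range (j + 1), a l ≠ 0 :=
    norm_ne_zero_iff.1 (hγ ▸ norm_ne_zero_iff.2 (ha₀ _))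
  have hord_γ : ordp p (∑ l ∈ Finset.range (j + 1), a l) = ordp p (a (j + 1)) := by
    rw [ordp, ordp, hγ]
  have hmain : ordp p ((p : K) ^ j * ∑ l ∈ Finset.range (j + 1), a l)
      = (p : ℝ) ^ (j + 1) / ((p : ℝ) ^ (m - i - 1) * ((p : ℝ) - 1)) - 1 := by
    rw [ordp_mul (pow_ne_zero _ hp₀) hγ₀, ordp_pow, ordp_eq_one_of_norm_eq_inv hp hpK, hord_γ,
      hord_a]
    push_cast
    ring
  refine ⟨hmain.ge, ?_⟩
  rw [hmain, show j - (m - i) + 1 = j - (m - i - 1) by omega]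
  linarith [pow_sub_le_pow_succ_div_sub hP (show m - i - 1 ≤ j by omega)]
end
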